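/- Assume (H1), (H2), (H3) and (H4)(2), and let γ ∈ (0, 2/L). For any Lipschitz function φ : ℝ^d → ℝ with Lipschitz constant L_φ, for every θ ∈ ℝ^d and every k ≥ 1, |R_γ^k φ(θ) − π_γ(φ)| ≤ L_φ · (1 − 2μγ(1 − γL/2))^{k/2} · (∫_{ℝ^d} ‖θ − ϑ‖² dπ_γ(ϑ))^{1/2}. -/

import Mathlib

open MeasureTheory ProbabilityTheory Filter Finset
open scoped ENNReal NNReal RealInnerProductSpace Topology

noncomputable section

namespace SGDFormal

/-- The state space `ℝ^d`. -/
abbrev Vec (d : ℕ) := EuclideanSpace ℝ (Fin d)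

variable {d q : ℕ} {Ω : Type*} [MeasurableSpace Ω]

/-- The outer product `v wᵀ` as a continuous linear map, `(v wᵀ) x = ⟪w, x⟫ v`. -/
def outer (v : Vec q) (w : Vec d) : Vec d →L[ℝ] Vec q :=
  (innerSL ℝ w).smulRight v

/-- The SGD iterates `θ_k^{(γ)}`, started at the deterministic point `θ0`:
`θ_{k+1} = θ_k - γ (f'(θ_k) + ε_{k+1}(θ_k))`. -/
def sgd (f' : Vec d → Vec d) (ε : ℕ → Vec d → Ω → Vec d) (γ : ℝ) (θ0 : Vec d) :
    ℕ → Ω → Vec d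
  | 0 => fun _ => θ0
  | k + 1 => fun ω =>
      sgd f' ε γ θ0 k ω - γ • (f' (sgd f' ε γ θ0 k ω) + ε (k + 1) (sgd f' ε γ θ0 k ω) ω)

/-- The one-step Markov kernel of SGD: `R_γ(θ, ·)` is the law of `θ - γ(f'(θ) + ε_1(θ))`. -/
def Rstep (P : Measure Ω) (f' : Vec d → Vec d) (ε : ℕ → Vec d → Ω → Vec d) (γ : ℝ)
    (θ : Vec d) : Measure (Vec d) :=
  P.map fun ω => θ - γ • (f' θ + ε 1 θ ω)

/-- The `k`-step kernel `R_γ^k`. -/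
def Riter (P : Measure Ω) (f' : Vec d → Vec d) (ε : ℕ → Vec d → Ω → Vec d) (γ : ℝ) :
    ℕ → Vec d → Measure (Vec d)
  | 0 => fun θ => Measure.dirac θ
  | k + 1 => fun θ => (Riter P f' ε γ k θ).bind (Rstep P f' ε γ)

/-- `π` is a stationary (invariant) probability measure for the kernel `R_γ`. -/
def IsStationary (P : Measure Ω) (f' : Vec d → Vec d) (ε : ℕ → Vec d → Ω → Vec d)
    (γ : ℝ) (π : Measure (Vec d)) : Prop :=
  π.bind (Rstep P f' ε γ) = π

/-- `π` has a finite second moment. -/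
def FiniteSecondMoment (π : Measure (Vec d)) : Prop :=
  ∫⁻ θ, (‖θ‖₊ : ℝ≥0∞) ^ 2 ∂π < ⊤

/-- Squared Wasserstein distance of order 2 (as an infimum over couplings). -/
def W2sq (μ ν : Measure (Vec d)) : ℝ :=
  sInf {r : ℝ | ∃ ξ : Measure (Vec d × Vec d), IsProbabilityMeasure ξ ∧
    ξ.map Prod.fst = μ ∧ ξ.map Prod.snd = ν ∧ r = ∫ p, ‖p.1 - p.2‖ ^ 2 ∂ξ}

/-- Poisson solution `ψ_γ(θ) = Σ_{i=0}^∞ (R_γ^i φ(θ) − π(φ))`. -/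
def poisson {F : Type*} [NormedAddCommGroup F] [NormedSpace ℝ F]
    (P : Measure Ω) (f' : Vec d → Vec d) (ε : ℕ → Vec d → Ω → Vec d) (γ : ℝ)
    (π : Measure (Vec d)) (φ : Vec d → F) (θ : Vec d) : F :=
  ∑' i : ℕ, (∫ ϑ, φ ϑ ∂(Riter P f' ε γ i θ) - ∫ ϑ, φ ϑ ∂π)

/-- Noise covariance `C(θ) = E[ε_1(θ)^{⊗2}]`. -/
def noiseCov (P : Measure Ω) (ε : ℕ → Vec d → Ω → Vec d) (θ : Vec d) :
    Vec d →L[ℝ] Vec d :=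
  ∫ ω, outer (ε 1 θ ω) (ε 1 θ ω) ∂P

/-- (H1): `f` is strongly convex with constant `m`. -/
def StrongConvexC (f : Vec d → ℝ) (m : ℝ) : Prop :=
  ∀ θ₁ θ₂ : Vec d, ∀ t : ℝ, t ∈ Set.Icc (0 : ℝ) 1 →
    f (t • θ₁ + (1 - t) • θ₂) ≤
      t * f θ₁ + (1 - t) * f θ₂ - m / 2 * (t * (1 - t)) * ‖θ₁ - θ₂‖ ^ 2

/-- (H2): `f` is `C^5`, with bounded 2nd–5th derivatives; `f'` is the gradient of `f`
and is `L`-Lipschitz. -/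
def H2 (f : Vec d → ℝ) (f' : Vec d → Vec d) (L : ℝ) : Prop :=
  ContDiff ℝ 5 f ∧ (∀ θ, HasGradientAt f (f' θ) θ) ∧
    (∀ i : ℕ, 2 ≤ i → i ≤ 5 → ∃ B : ℝ, ∀ θ, ‖iteratedFDeriv ℝ i f θ‖ ≤ B) ∧
    ∀ θ₁ θ₂ : Vec d, ‖f' θ₁ - f' θ₂‖ ≤ L * ‖θ₁ - θ₂‖

/-- `θstar` is a (the) global minimizer of `f`. -/
def IsMinimizer (f : Vec d → ℝ) (θstar : Vec d) : Prop :=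
  ∀ θ, f θstar ≤ f θ

/-- (H3): `(ℱ_k)` is a filtration, `ε_{k+1}(θ)` is `ℱ_{k+1}`-measurable with zero conditional
expectation given `ℱ_k`, and the random fields `(ε_k)_{k ≥ 1}` are i.i.d. -/
def H3 (P : Measure Ω) (ℱ : ℕ → MeasurableSpace Ω) (ε : ℕ → Vec d → Ω → Vec d) : Prop :=
  (∀ k, ℱ k ≤ ℱ (k + 1)) ∧ (∀ k, ℱ k ≤ (inferInstance : MeasurableSpace Ω)) ∧
    (∀ (k : ℕ) (θ : Vec d), Measurable[ℱ (k + 1)] (ε (k + 1) θ)) ∧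
    (∀ (k : ℕ) (θ : Vec d), P[ε (k + 1) θ|ℱ k] =ᵐ[P] 0) ∧
    (iIndepFun (m := fun _ : ℕ => MeasurableSpace.pi)
      (fun (k : ℕ) (ω : Ω) (θ : Vec d) => ε (k + 1) θ ω) P) ∧
    ∀ j k : ℕ, IdentDistrib (fun (ω : Ω) (θ : Vec d) => ε (j + 1) θ ω)
      (fun (ω : Ω) (θ : Vec d) => ε (k + 1) θ ω) P P

/-- (H4)(p): a.s. `L`-co-coercivity of `f'_k = f' + ε_k` and a `p`-th moment bound `τ` on the
noise at the optimum. -/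
def H4 (P : Measure Ω) (f' : Vec d → Vec d) (ε : ℕ → Vec d → Ω → Vec d)
    (θstar : Vec d) (L : ℝ) (p : ℕ) (τ : ℝ) : Prop :=
  (∀ k : ℕ, 1 ≤ k → ∀ᵐ ω ∂P, ∀ θ η : Vec d,
      ‖(f' θ + ε k θ ω) - (f' η + ε k η ω)‖ ^ 2 ≤
        L * ⟪(f' θ + ε k θ ω) - (f' η + ε k η ω), θ - η⟫) ∧
    0 ≤ τ ∧ ∀ k : ℕ, 1 ≤ k →
      (∫⁻ ω, (‖ε k θstar ω‖₊ : ℝ≥0∞) ^ p ∂P) ≤ ENNReal.ofReal (τ ^ p)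

end SGDFormal

/-! Run two copies of the SGD chain with the same noise (a synchronous coupling), one started at
`θ` and one at stationarity. Co-coercivity of `f'_1` and strong convexity of `f` make the random
step `T θ = θ - γ f'_1(θ)` a contraction in mean square, `E‖T θ - T η‖² ≤ ρ ‖θ - η‖²` with
`ρ = 1 - 2μγ(1 - γL/2)`, so after `k` steps the coupling of `R_γ^k(θ, ·)` and `π_γ` has mean
squared distance at most `ρ^k ∫ ‖θ - ϑ‖² dπ_γ`. A Lipschitz `φ` moves its mean by at most `L_φ`
times the `L¹`, hence the `L²`, distance of any coupling. Co-coercivity only holds almost surely,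
so the noise is first switched off on a null set (`regGrad`) to get a jointly measurable step. -/

open Function

section Convexity

variable {E : Type*} [NormedAddCommGroup E] [InnerProductSpace ℝ E] [CompleteSpace E]

theorem ConvexOn.inner_gradient_sub_nonneg {h : E → ℝ} {h' : E → E}
    (hh : ConvexOn ℝ Set.univ h) (hgrad : ∀ x, HasGradientAt h (h' x) x) (x y : E) :
    0 ≤ ⟪h' x - h' y, x - y⟫ := by
  have hg : ConvexOn ℝ Set.univ (h ∘ AffineMap.lineMap y x) := hh.comp_affineMap _
  have hderiv (t : ℝ) : HasDerivAt (h ∘ AffineMap.lineMap y x)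
      ⟪h' (AffineMap.lineMap y x t), x - y⟫ t := by
    simpa using (hgrad _).hasFDerivAt.comp_hasDerivAt t AffineMap.hasDerivAt_lineMap
  have := (hg.le_slope_of_hasDerivAt trivial trivial zero_lt_one (hderiv 0)).trans
    (hg.slope_le_of_hasDerivAt trivial trivial zero_lt_one (hderiv 1))
  simp only [AffineMap.lineMap_apply_zero, AffineMap.lineMap_apply_one] at this
  rw [inner_sub_left]
  linarith

theorem StrongConvexOn.inner_gradient_sub_ge {f : E → ℝ} {f' : E → E} {m : ℝ}
    (hf : StrongConvexOn Set.univ m f) (hgrad : ∀ x, HasGradientAt f (f' x) x) (x y : E) :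
    m * ‖x - y‖ ^ 2 ≤ ⟪f' x - f' y, x - y⟫ := by
  have hsq (x : E) : HasGradientAt (fun x => m / 2 * ‖x‖ ^ 2) (m • x) x := by
    rw [hasGradientAt_iff_hasFDerivAt]
    refine ((hasStrictFDerivAt_norm_sq x).hasFDerivAt.const_mul (m / 2)).congr_fderiv ?_
    ext v
    simp only [smul_apply, coe_innerSL_apply, nsmul_eq_mul, Nat.cast_ofNat,
      smul_eq_mul, map_smul, InnerProductSpace.toDual_apply_apply]
    ring
  have hgrad' (x : E) : HasGradientAt (fun x => f x - m / 2 * ‖x‖ ^ 2) (f' x - m • x) x := by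
    rw [hasGradientAt_iff_hasFDerivAt, map_sub]
    exact (hgrad x).hasFDerivAt.sub (hsq x).hasFDerivAt
  have := ConvexOn.inner_gradient_sub_nonneg (strongConvexOn_iff_convex.mp hf) hgrad' x y
  rwa [show f' x - m • x - (f' y - m • y) = f' x - f' y - m • (x - y) by module, inner_sub_left,
    real_inner_smul_left, real_inner_self_eq_norm_sq, sub_nonneg] at this

end Convexity

section Cocoercive

variable {E : Type*} [NormedAddCommGroup E] [InnerProductSpace ℝ E]

def IsCocoercive (L : ℝ) (g : E → E) : Prop :=
  ∀ x y, ‖g x - g y‖ ^ 2 ≤ L * ⟪g x - g y, x - y⟫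

theorem IsCocoercive.norm_sub_le {L : ℝ} {g : E → E} (hg : IsCocoercive L g) (hL : 0 ≤ L)
    (x y : E) : ‖g x - g y‖ ≤ L * ‖x - y‖ := by
  have h := (hg x y).trans (mul_le_mul_of_nonneg_left (real_inner_le_norm _ _) hL)
  rcases (norm_nonneg (g x - g y)).eq_or_lt with h0 | h0
  · rw [← h0]; positivity
  · nlinarith

theorem le_of_inner_sub_ge_of_norm_sub_le [Nontrivial E] {g : E → E} {m L : ℝ}
    (hmono : ∀ x y, m * ‖x - y‖ ^ 2 ≤ ⟪g x - g y, x - y⟫)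
    (hlip : ∀ x y, ‖g x - g y‖ ≤ L * ‖x - y‖) : m ≤ L := by
  obtain ⟨x, y, hxy⟩ := exists_pair_ne E
  have hpos : 0 < ‖x - y‖ := norm_pos_iff.mpr (sub_ne_zero.mpr hxy)
  have := (hmono x y).trans ((real_inner_le_norm _ _).trans
    (mul_le_mul_of_nonneg_right (hlip x y) hpos.le))
  exact le_of_mul_le_mul_right (by linarith : m * ‖x - y‖ ^ 2 ≤ L * ‖x - y‖ ^ 2) (by positivity)

end Cocoercive

section Contraction

variable {E Ω : Type*} [NormedAddCommGroup E] [InnerProductSpace ℝ E] [CompleteSpace E]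
  [MeasurableSpace Ω] {P : Measure Ω} [IsProbabilityMeasure P]

theorem lintegral_enorm_sub_smul_sub_sq_le {G : E → Ω → E} {g : E → E} {x y : E} {m L γ : ℝ}
    (hγ : 0 ≤ γ) (hγL : γ * L ≤ 2) (hGx : Integrable (G x) P) (hGy : Integrable (G y) P)
    (hgx : ∫ ω, G x ω ∂P = g x) (hgy : ∫ ω, G y ω ∂P = g y)
    (hco : ∀ᵐ ω ∂P, ‖G x ω - G y ω‖ ^ 2 ≤ L * ⟪G x ω - G y ω, x - y⟫)
    (hmono : m * ‖x - y‖ ^ 2 ≤ ⟪g x - g y, x - y⟫) :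
    ∫⁻ ω, ‖(x - γ • G x ω) - (y - γ • G y ω)‖ₑ ^ 2 ∂P ≤
      ENNReal.ofReal (1 - 2 * m * γ * (1 - γ * L / 2)) * ‖x - y‖ₑ ^ 2 := by
  set c := γ * (2 - γ * L)
  have hc : 0 ≤ c := mul_nonneg hγ (by linarith)
  set bound := fun ω => ‖x - y‖ ^ 2 - c * ⟪x - y, G x ω - G y ω⟫
  have hpt : ∀ᵐ ω ∂P, ‖(x - γ • G x ω) - (y - γ • G y ω)‖ ^ 2 ≤ bound ω := by
    filter_upwards [hco] with ω hω
    rw [show (x - γ • G x ω) - (y - γ • G y ω) = (x - y) - γ • (G x ω - G y ω) by module,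
      norm_sub_sq_real, real_inner_smul_right, norm_smul, mul_pow, Real.norm_eq_abs, sq_abs]
    rw [real_inner_comm] at hω
    nlinarith [mul_le_mul_of_nonneg_left hω (sq_nonneg γ)]
  have hinner : Integrable (fun ω => c * ⟪x - y, G x ω - G y ω⟫) P :=
    ((hGx.sub hGy).const_inner (x - y)).const_mul c
  have hint : Integrable bound P := (integrable_const _).sub hinner
  have hmean : ∫ ω, bound ω ∂P = ‖x - y‖ ^ 2 - c * ⟪g x - g y, x - y⟫ := by
    rw [integral_sub (integrable_const _) hinner, integral_const_mul,
      integral_inner (f := fun ω => G x ω - G y ω) (hGx.sub hGy), integral_sub hGx hGy, hgx, hgy,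
      real_inner_comm]
    simp
  calc ∫⁻ ω, ‖(x - γ • G x ω) - (y - γ • G y ω)‖ₑ ^ 2 ∂P
      = ∫⁻ ω, ENNReal.ofReal (‖(x - γ • G x ω) - (y - γ • G y ω)‖ ^ 2) ∂P := by
        simp [ENNReal.ofReal_pow]
    _ ≤ ∫⁻ ω, ENNReal.ofReal (bound ω) ∂P :=
        lintegral_mono_ae (hpt.mono fun ω h => ENNReal.ofReal_le_ofReal h)
    _ = ENNReal.ofReal (∫ ω, bound ω ∂P) :=
        (ofReal_integral_eq_lintegral_ofReal hint (hpt.mono fun ω h => (sq_nonneg _).trans h)).symm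
    _ ≤ ENNReal.ofReal ((1 - 2 * m * γ * (1 - γ * L / 2)) * ‖x - y‖ ^ 2) := by
        refine ENNReal.ofReal_le_ofReal ?_
        rw [hmean]
        nlinarith [mul_le_mul_of_nonneg_left hmono hc]
    _ = ENNReal.ofReal (1 - 2 * m * γ * (1 - γ * L / 2)) * ‖x - y‖ₑ ^ 2 := by
        rw [ENNReal.ofReal_mul' (sq_nonneg _), ENNReal.ofReal_pow (norm_nonneg _), ofReal_norm]

theorem sgd_rate_nonneg {m L γ : ℝ} (hmL : m ≤ L) (hγ : 0 ≤ γ) (hγL : γ * L ≤ 2) :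
    0 ≤ 1 - 2 * m * γ * (1 - γ * L / 2) := by
  rcases le_total 0 m with hm | hm
  · nlinarith [mul_nonneg (mul_nonneg hm (sq_nonneg γ)) (sub_nonneg.mpr hmL), sq_nonneg (1 - m * γ)]
  · nlinarith [mul_nonneg (neg_nonneg.mpr hm) (mul_nonneg hγ (sub_nonneg.mpr hγL))]

end Contraction

section SynchronousCoupling

variable {E Ω : Type*} [MeasurableSpace E] [MeasurableSpace Ω] {P : Measure Ω}
  [IsProbabilityMeasure P] {T : E → Ω → E}

def syncMap (T : E → Ω → E) (p : (E × E) × Ω) : E × E :=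
  (T p.1.1 p.2, T p.1.2 p.2)

def syncStep (P : Measure Ω) (T : E → Ω → E) (ξ : Measure (E × E)) : Measure (E × E) :=
  (ξ.prod P).map (syncMap T)

theorem measurable_map_of_measurable_uncurry (hT : Measurable (uncurry T)) :
    Measurable fun x => P.map (T x) := by
  have h (x : E) : P.map (T x) = (P.map (Prod.mk x)).map (uncurry T) := by
    rw [Measure.map_map hT measurable_prodMk_left]; rfl
  simp_rw [h]
  exact (Measure.measurable_map _ hT).comp Measurable.map_prodMk_left

theorem bind_map_eq_map_prod (hT : Measurable (uncurry T)) (μ : Measure E) [SFinite μ] :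
    μ.bind (fun x => P.map (T x)) = (μ.prod P).map (uncurry T) := by
  ext s hs
  rw [Measure.bind_apply hs (measurable_map_of_measurable_uncurry hT).aemeasurable,
    Measure.map_apply hT hs, Measure.prod_apply (hT hs)]
  refine lintegral_congr fun x => ?_
  exact Measure.map_apply (hT.comp measurable_prodMk_left) hs

theorem measurable_syncMap (hT : Measurable (uncurry T)) : Measurable (syncMap T) :=
  (hT.comp (measurable_fst.fst.prodMk measurable_snd)).prodMk
    (hT.comp (measurable_fst.snd.prodMk measurable_snd))

theorem isProbabilityMeasure_syncStep (hT : Measurable (uncurry T)) (ξ : Measure (E × E))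
    [IsProbabilityMeasure ξ] : IsProbabilityMeasure (syncStep P T ξ) :=
  Measure.isProbabilityMeasure_map (measurable_syncMap hT).aemeasurable

theorem map_fst_syncStep (hT : Measurable (uncurry T)) (ξ : Measure (E × E)) [SFinite ξ] :
    (syncStep P T ξ).map Prod.fst = (ξ.map Prod.fst).bind fun x => P.map (T x) := by
  have h := Measure.map_prod_map ξ P measurable_fst measurable_id
  rw [Measure.map_id] at h
  rw [bind_map_eq_map_prod hT, h, Measure.map_map hT (measurable_fst.prodMap measurable_id),
    syncStep, Measure.map_map measurable_fst (measurable_syncMap hT)]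
  rfl

theorem map_snd_syncStep (hT : Measurable (uncurry T)) (ξ : Measure (E × E)) [SFinite ξ] :
    (syncStep P T ξ).map Prod.snd = (ξ.map Prod.snd).bind fun x => P.map (T x) := by
  have h := Measure.map_prod_map ξ P measurable_snd measurable_id
  rw [Measure.map_id] at h
  rw [bind_map_eq_map_prod hT, h, Measure.map_map hT (measurable_snd.prodMap measurable_id),
    syncStep, Measure.map_map measurable_snd (measurable_syncMap hT)]
  rfl

variable [NormedAddCommGroup E] [BorelSpace E] [SecondCountableTopology E]

theorem measurable_enorm_sub_sq :
    Measurable fun p : E × E => ‖p.1 - p.2‖ₑ ^ 2 :=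
  (measurable_fst.sub measurable_snd).enorm.pow_const 2

theorem lintegral_enorm_sub_sq_syncStep_le (hT : Measurable (uncurry T)) {ρ : ℝ≥0∞}
    (hρ : ∀ x y, ∫⁻ ω, ‖T x ω - T y ω‖ₑ ^ 2 ∂P ≤ ρ * ‖x - y‖ₑ ^ 2)
    (ξ : Measure (E × E)) [SFinite ξ] :
    ∫⁻ p, ‖p.1 - p.2‖ₑ ^ 2 ∂(syncStep P T ξ) ≤ ρ * ∫⁻ p, ‖p.1 - p.2‖ₑ ^ 2 ∂ξ := by
  rw [syncStep, lintegral_map measurable_enorm_sub_sq (measurable_syncMap hT),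
    lintegral_prod _ ?_, ← lintegral_const_mul _ measurable_enorm_sub_sq]
  · exact lintegral_mono fun p => hρ p.1 p.2
  · exact (measurable_enorm_sub_sq.comp (measurable_syncMap hT)).aemeasurable

theorem exists_coupling_of_lintegral_enorm_sub_sq_le (hT : Measurable (uncurry T))
    {ρ : ℝ≥0∞} (hρ : ∀ x y, ∫⁻ ω, ‖T x ω - T y ω‖ₑ ^ 2 ∂P ≤ ρ * ‖x - y‖ₑ ^ 2)
    {θ : E} {μ : ℕ → Measure E} (hμ0 : μ 0 = Measure.dirac θ)
    (hμ : ∀ k, μ (k + 1) = (μ k).bind fun x => P.map (T x))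
    {π : Measure E} [IsProbabilityMeasure π] (hπ : π.bind (fun x => P.map (T x)) = π) (k : ℕ) :
    ∃ ξ : Measure (E × E), IsProbabilityMeasure ξ ∧ ξ.map Prod.fst = μ k ∧
      ξ.map Prod.snd = π ∧ ∫⁻ p, ‖p.1 - p.2‖ₑ ^ 2 ∂ξ ≤ ρ ^ k * ∫⁻ x, ‖θ - x‖ₑ ^ 2 ∂π := by
  induction k with
  | zero =>
    refine ⟨(Measure.dirac θ).prod π, inferInstance, by simp [hμ0], by simp, ?_⟩
    rw [Measure.dirac_prod, lintegral_map measurable_enorm_sub_sq measurable_prodMk_left]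
    simp
  | succ k ih =>
    obtain ⟨ξ, hξ, hfst, hsnd, hcost⟩ := ih
    refine ⟨syncStep P T ξ, isProbabilityMeasure_syncStep hT ξ, ?_, ?_, ?_⟩
    · rw [map_fst_syncStep hT, hfst, hμ]
    · rw [map_snd_syncStep hT, hsnd, hπ]
    · calc ∫⁻ p, ‖p.1 - p.2‖ₑ ^ 2 ∂syncStep P T ξ ≤ ρ * ∫⁻ p, ‖p.1 - p.2‖ₑ ^ 2 ∂ξ :=
            lintegral_enorm_sub_sq_syncStep_le hT hρ ξ
        _ ≤ ρ * (ρ ^ k * ∫⁻ x, ‖θ - x‖ₑ ^ 2 ∂π) := by gcongr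
        _ = ρ ^ (k + 1) * ∫⁻ x, ‖θ - x‖ₑ ^ 2 ∂π := by ring

end SynchronousCoupling

section LipschitzCoupling

variable {α E : Type*} [MeasurableSpace α] {μ : Measure α} [NormedAddCommGroup E]

theorem memLp_two_iff_lintegral_enorm_sq_lt_top {f : α → E} (hf : AEStronglyMeasurable f μ) :
    MemLp f 2 μ ↔ ∫⁻ a, ‖f a‖ₑ ^ 2 ∂μ < ∞ := by
  rw [MemLp, and_iff_right hf,
    eLpNorm_lt_top_iff_lintegral_rpow_enorm_lt_top two_ne_zero ENNReal.ofNat_ne_top]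
  simp

theorem toReal_lintegral_enorm_sq {f : α → E} (hf : AEStronglyMeasurable f μ) :
    (∫⁻ a, ‖f a‖ₑ ^ 2 ∂μ).toReal = ∫ a, ‖f a‖ ^ 2 ∂μ := by
  rw [← integral_toReal (hf.enorm.pow_const 2) (ae_of_all _ fun a => by simp)]
  simp

theorem integral_norm_le_sqrt_lintegral_enorm_sq [IsProbabilityMeasure μ] {f : α → E}
    (hf : MemLp f 2 μ) : ∫ a, ‖f a‖ ∂μ ≤ √(∫⁻ a, ‖f a‖ₑ ^ 2 ∂μ).toReal := by
  have h12 : ENNReal.ofReal (∫ a, ‖f a‖ ∂μ) ≤ eLpNorm f 2 μ := by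
    rw [ofReal_integral_norm_eq_lintegral_enorm (hf.integrable one_le_two),
      ← eLpNorm_one_eq_lintegral_enorm]
    exact eLpNorm_le_eLpNorm_of_exponent_le one_le_two hf.1
  calc ∫ a, ‖f a‖ ∂μ = (ENNReal.ofReal (∫ a, ‖f a‖ ∂μ)).toReal :=
        (ENNReal.toReal_ofReal (integral_nonneg fun a => norm_nonneg (f a))).symm
    _ ≤ (eLpNorm f 2 μ).toReal := ENNReal.toReal_mono hf.eLpNorm_ne_top h12
    _ = √(∫⁻ a, ‖f a‖ₑ ^ 2 ∂μ).toReal := by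
        rw [eLpNorm_eq_lintegral_rpow_enorm_toReal two_ne_zero ENNReal.ofNat_ne_top,
          Real.sqrt_eq_rpow, ← ENNReal.toReal_rpow]
        simp

theorem LipschitzWith.integrable_of_integrable_sub {F : Type*} [NormedAddCommGroup F] {K : ℝ≥0}
    {φ : E → F} (hφ : LipschitzWith K φ) {f g : α → E} (hg : Integrable (fun a => φ (g a)) μ)
    (hfg : Integrable (fun a => f a - g a) μ) (hf : AEStronglyMeasurable f μ) :
    Integrable (fun a => φ (f a)) μ := by
  refine Integrable.mono' (hg.norm.add (hfg.norm.const_mul K))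
    (hφ.continuous.comp_aestronglyMeasurable hf) (ae_of_all _ fun a => ?_)
  have := hφ.norm_sub_le (f a) (g a)
  simp only [Pi.add_apply]
  linarith [norm_le_norm_add_norm_sub' (φ (f a)) (φ (g a))]

variable [MeasurableSpace E] [BorelSpace E] [SecondCountableTopology E]

theorem abs_integral_sub_integral_le_of_coupling {ξ : Measure (E × E)} [IsProbabilityMeasure ξ]
    {φ : E → ℝ} {K : ℝ≥0} (hφ : LipschitzWith K φ) (hint : Integrable φ (ξ.map Prod.snd))
    (hcost : ∫⁻ p, ‖p.1 - p.2‖ₑ ^ 2 ∂ξ < ∞) :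
    |∫ x, φ x ∂(ξ.map Prod.fst) - ∫ x, φ x ∂(ξ.map Prod.snd)| ≤
      K * √(∫⁻ p, ‖p.1 - p.2‖ₑ ^ 2 ∂ξ).toReal := by
  have hD : MemLp (fun p : E × E => p.1 - p.2) 2 ξ :=
    (memLp_two_iff_lintegral_enorm_sq_lt_top
      (measurable_fst.sub measurable_snd).aestronglyMeasurable).mpr hcost
  have h2 : Integrable (fun p : E × E => φ p.2) ξ :=
    (integrable_map_measure hint.1 measurable_snd.aemeasurable).mp hint
  have h1 : Integrable (fun p : E × E => φ p.1) ξ :=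
    hφ.integrable_of_integrable_sub h2 (hD.integrable one_le_two)
      measurable_fst.aestronglyMeasurable
  rw [integral_map measurable_fst.aemeasurable hφ.continuous.aestronglyMeasurable,
    integral_map measurable_snd.aemeasurable hφ.continuous.aestronglyMeasurable,
    ← integral_sub h1 h2]
  calc |∫ p, φ p.1 - φ p.2 ∂ξ| ≤ ∫ p, ‖φ p.1 - φ p.2‖ ∂ξ := by
        rw [← Real.norm_eq_abs]
        exact norm_integral_le_integral_norm _
    _ ≤ ∫ p, K * ‖p.1 - p.2‖ ∂ξ :=
        integral_mono (h1.sub h2).norm ((hD.integrable one_le_two).norm.const_mul _)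
          fun p => hφ.norm_sub_le _ _
    _ = K * ∫ p, ‖p.1 - p.2‖ ∂ξ := integral_const_mul _ _
    _ ≤ K * √(∫⁻ p, ‖p.1 - p.2‖ₑ ^ 2 ∂ξ).toReal := by
        gcongr
        exact integral_norm_le_sqrt_lintegral_enorm_sq hD

end LipschitzCoupling

namespace SGDFormal

section

variable {d : ℕ} {Ω : Type*}

theorem StrongConvexC.strongConvexOn {f : Vec d → ℝ} {m : ℝ} (h : StrongConvexC f m) :
    StrongConvexOn Set.univ m f := by
  refine ⟨convex_univ, fun x _ y _ a b ha hb hab => ?_⟩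
  obtain rfl : b = 1 - a := by linarith
  convert h x y a ⟨ha, by linarith⟩ using 1
  simp only [smul_eq_mul]
  ring

variable {N : Set Ω} {f' : Vec d → Vec d} {ε : ℕ → Vec d → Ω → Vec d} {L : ℝ}

theorem H2.hasGradientAt {f : Vec d → ℝ} (h2 : H2 f f' L) (x : Vec d) :
    HasGradientAt f (f' x) x :=
  h2.2.1 x

theorem H2.norm_sub_le {f : Vec d → ℝ} (h2 : H2 f f' L) (x y : Vec d) :
    ‖f' x - f' y‖ ≤ L * ‖x - y‖ :=
  h2.2.2.2 x y

def regGrad (N : Set Ω) (f' : Vec d → Vec d) (ε : ℕ → Vec d → Ω → Vec d) (x : Vec d)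
    (ω : Ω) : Vec d :=
  f' x + Nᶜ.indicator (ε 1 x) ω

theorem regGrad_of_notMem {ω : Ω} (hω : ω ∉ N) (x : Vec d) :
    regGrad N f' ε x ω = f' x + ε 1 x ω := by
  simp [regGrad, hω]

theorem regGrad_of_mem {ω : Ω} (hω : ω ∈ N) (x : Vec d) : regGrad N f' ε x ω = f' x := by
  simp [regGrad, hω]

theorem norm_regGrad_sub_le (hL : 0 ≤ L) (hf' : ∀ x y, ‖f' x - f' y‖ ≤ L * ‖x - y‖)
    (hco : ∀ ω ∉ N, IsCocoercive L fun x => f' x + ε 1 x ω) (ω : Ω) (x y : Vec d) :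
    ‖regGrad N f' ε x ω - regGrad N f' ε y ω‖ ≤ L * ‖x - y‖ := by
  by_cases hω : ω ∈ N
  · simpa only [regGrad_of_mem hω] using hf' x y
  · simpa only [regGrad_of_notMem hω] using (hco ω hω).norm_sub_le hL x y

variable [MeasurableSpace Ω] {P : Measure Ω}

theorem H3.measurable_noise {ℱ : ℕ → MeasurableSpace Ω} (h3 : H3 P ℱ ε) (x : Vec d) :
    Measurable (ε 1 x) :=
  (h3.2.2.1 0 x).mono (h3.2.1 1) le_rfl

theorem H3.integral_noise_eq_zero [IsFiniteMeasure P] {ℱ : ℕ → MeasurableSpace Ω}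
    (h3 : H3 P ℱ ε) (x : Vec d) : ∫ ω, ε 1 x ω ∂P = 0 := by
  rw [← integral_condExp (h3.2.1 0), integral_congr_ae (h3.2.2.2.1 0 x)]
  simp

theorem H4.integrable_noise [IsFiniteMeasure P] {θstar : Vec d} {τ : ℝ}
    (h4 : H4 P f' ε θstar L 2 τ) (hε : AEStronglyMeasurable (ε 1 θstar) P) :
    Integrable (ε 1 θstar) P :=
  ((memLp_two_iff_lintegral_enorm_sq_lt_top hε).mpr
    ((h4.2.2 1 le_rfl).trans_lt ENNReal.ofReal_lt_top)).integrable one_le_two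

theorem H4.ae_isCocoercive {θstar : Vec d} {p : ℕ} {τ : ℝ} (h4 : H4 P f' ε θstar L p τ) :
    ∀ᵐ ω ∂P, IsCocoercive L fun x => f' x + ε 1 x ω :=
  h4.1 1 le_rfl

theorem regGrad_ae_eq (hN : P N = 0) (x : Vec d) :
    regGrad N f' ε x =ᵐ[P] fun ω => f' x + ε 1 x ω := by
  filter_upwards [measure_eq_zero_iff_ae_notMem.mp hN] with ω hω using regGrad_of_notMem hω x

section RegularityOfRegGrad

variable (hlip : ∀ ω x y, ‖regGrad N f' ε x ω - regGrad N f' ε y ω‖ ≤ L * ‖x - y‖)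
  (hNm : MeasurableSet N) (hε : ∀ x, Measurable (ε 1 x))
include hlip hNm hε

theorem measurable_uncurry_regGrad : Measurable (uncurry (regGrad N f' ε)) :=
  measurable_uncurry_of_continuous_of_measurable
    (fun ω => (LipschitzWith.of_dist_le' fun x y => by
      simpa only [dist_eq_norm] using hlip ω x y).continuous)
    (fun x => measurable_const.add ((hε x).indicator hNm.compl))

theorem integrable_regGrad [IsFiniteMeasure P] {θstar : Vec d}
    (hstar : Integrable (ε 1 θstar) P) (x : Vec d) : Integrable (regGrad N f' ε x) P := by
  have h0 : Integrable (regGrad N f' ε θstar) P :=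
    (integrable_const _).add (hstar.indicator hNm.compl)
  refine (h0.norm.add (integrable_const (L * ‖x - θstar‖))).mono'
    ((measurable_uncurry_regGrad hlip hNm hε).comp measurable_prodMk_left).aestronglyMeasurable
    (ae_of_all _ fun ω => ?_)
  have := norm_le_norm_add_norm_sub' (regGrad N f' ε x ω) (regGrad N f' ε θstar ω)
  simp only [Pi.add_apply]
  linarith [hlip ω x θstar]

end RegularityOfRegGrad

theorem integral_regGrad [IsProbabilityMeasure P] (hN : P N = 0) {x : Vec d}
    (hint : Integrable (regGrad N f' ε x) P) (hmean : ∫ ω, ε 1 x ω ∂P = 0) :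
    ∫ ω, regGrad N f' ε x ω ∂P = f' x := by
  have hε : Integrable (ε 1 x) P := (hint.sub (integrable_const (f' x))).congr <| by
    filter_upwards [regGrad_ae_eq (f' := f') (ε := ε) hN x] with ω hω
    simp [hω]
  rw [integral_congr_ae (regGrad_ae_eq hN x), integral_add (integrable_const _) hε, hmean]
  simp

theorem Rstep_eq_map_regGrad {γ : ℝ} (hN : P N = 0) :
    Rstep P f' ε γ = fun x => P.map fun ω => x - γ • regGrad N f' ε x ω :=
  funext fun x => Measure.map_congr <| by
    filter_upwards [regGrad_ae_eq hN x] with ω hω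
    rw [hω]

theorem exists_coupling_Riter [IsProbabilityMeasure P] {ℱ : ℕ → MeasurableSpace Ω}
    {f : Vec d → ℝ} {θstar : Vec d} {m τ γ : ℝ} (h1 : StrongConvexC f m) (h2 : H2 f f' L)
    (h3 : H3 P ℱ ε) (h4 : H4 P f' ε θstar L 2 τ) (hL : 0 ≤ L) (hγ : 0 ≤ γ) (hγL : γ * L ≤ 2)
    {π : Measure (Vec d)} [IsProbabilityMeasure π] (hπ : IsStationary P f' ε γ π) (θ : Vec d)
    (k : ℕ) :
    ∃ ξ : Measure (Vec d × Vec d), IsProbabilityMeasure ξ ∧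
      ξ.map Prod.fst = Riter P f' ε γ k θ ∧ ξ.map Prod.snd = π ∧
      ∫⁻ p, ‖p.1 - p.2‖ₑ ^ 2 ∂ξ ≤
        ENNReal.ofReal (1 - 2 * m * γ * (1 - γ * L / 2)) ^ k * ∫⁻ x, ‖θ - x‖ₑ ^ 2 ∂π := by
  set N := toMeasurable P {ω | ¬IsCocoercive L fun x => f' x + ε 1 x ω}
  have hN : P N = 0 := by
    rw [measure_toMeasurable]
    exact ae_iff.mp h4.ae_isCocoercive
  have hco (ω) (hω : ω ∉ N) : IsCocoercive L fun x => f' x + ε 1 x ω :=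
    not_not.mp fun h => hω (subset_toMeasurable _ _ h)
  have hlip := norm_regGrad_sub_le hL h2.norm_sub_le hco
  have hNm : MeasurableSet N := measurableSet_toMeasurable _ _
  have hint := integrable_regGrad hlip hNm h3.measurable_noise
    (h4.integrable_noise (h3.measurable_noise θstar).aestronglyMeasurable)
  have hmean (x) := integral_regGrad hN (hint x) (h3.integral_noise_eq_zero x)
  have hT : Measurable (uncurry fun x ω => x - γ • regGrad N f' ε x ω) :=
    measurable_fst.sub ((measurable_uncurry_regGrad hlip hNm h3.measurable_noise).const_smul γ)
  have hρ (x y : Vec d) := lintegral_enorm_sub_smul_sub_sq_le hγ hγL (hint x) (hint y)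
    (hmean x) (hmean y)
    (by filter_upwards [measure_eq_zero_iff_ae_notMem.mp hN] with ω hω
        simpa only [regGrad_of_notMem hω] using hco ω hω x y)
    (h1.strongConvexOn.inner_gradient_sub_ge h2.hasGradientAt x y)
  have hR := Rstep_eq_map_regGrad (f' := f') (ε := ε) (γ := γ) hN
  exact exists_coupling_of_lintegral_enorm_sub_sq_le hT hρ (μ := fun k => Riter P f' ε γ k θ)
    rfl (fun k => by rw [← hR]; rfl) (by rw [← hR]; exact hπ) k

theorem FiniteSecondMoment.memLp_const_sub {π : Measure (Vec d)} [IsFiniteMeasure π]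
    (hπ : FiniteSecondMoment π) (θ : Vec d) : MemLp (fun x => θ - x) 2 π :=
  (memLp_const θ).sub ((memLp_two_iff_lintegral_enorm_sq_lt_top aestronglyMeasurable_id).mpr hπ)

theorem abs_integral_Riter_sub_integral_le [IsProbabilityMeasure P] {ℱ : ℕ → MeasurableSpace Ω}
    {f : Vec d → ℝ} {θstar : Vec d} {m τ γ : ℝ} (h1 : StrongConvexC f m) (h2 : H2 f f' L)
    (h3 : H3 P ℱ ε) (h4 : H4 P f' ε θstar L 2 τ) (hL : 0 ≤ L) (hγ : 0 ≤ γ) (hγL : γ * L ≤ 2)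
    {π : Measure (Vec d)} [IsProbabilityMeasure π] (hπ2 : FiniteSecondMoment π)
    (hπ : IsStationary P f' ε γ π) {φ : Vec d → ℝ} {K : ℝ≥0} (hφ : LipschitzWith K φ)
    (θ : Vec d) (k : ℕ) :
    |∫ x, φ x ∂(Riter P f' ε γ k θ) - ∫ x, φ x ∂π| ≤
      K * √(ENNReal.ofReal (1 - 2 * m * γ * (1 - γ * L / 2)) ^ k *
        ∫⁻ x, ‖θ - x‖ₑ ^ 2 ∂π).toReal := by
  obtain ⟨ξ, hξ, hfst, hsnd, hcost⟩ := exists_coupling_Riter h1 h2 h3 h4 hL hγ hγL hπ θ k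
  have hθπ := hπ2.memLp_const_sub θ
  have hB : ENNReal.ofReal (1 - 2 * m * γ * (1 - γ * L / 2)) ^ k * ∫⁻ x, ‖θ - x‖ₑ ^ 2 ∂π < ∞ :=
    ENNReal.mul_lt_top (ENNReal.pow_lt_top ENNReal.ofReal_lt_top)
      ((memLp_two_iff_lintegral_enorm_sq_lt_top hθπ.1).mp hθπ)
  have hφπ : Integrable φ π := hφ.integrable_of_integrable_sub (g := fun _ => θ)
    (integrable_const _) ((hθπ.integrable one_le_two).neg.congr (ae_of_all _ fun x => by simp))
    aestronglyMeasurable_id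
  have key := abs_integral_sub_integral_le_of_coupling hφ (hsnd ▸ hφπ) (hcost.trans_lt hB)
  rw [hfst, hsnd] at key
  exact key.trans (mul_le_mul_of_nonneg_left
    (Real.sqrt_le_sqrt (ENNReal.toReal_mono hB.ne hcost)) K.coe_nonneg)

end

theorem kernel_convergence_lipschitz_general
    {d : ℕ} {Ω : Type*} [MeasurableSpace Ω]
    (P : Measure Ω) [IsProbabilityMeasure P] (ℱ : ℕ → MeasurableSpace Ω)
    (f : Vec d → ℝ) (f' : Vec d → Vec d) (ε : ℕ → Vec d → Ω → Vec d)
    (θstar : Vec d) (m L τ : ℝ) (hL : 0 < L)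
    (h1 : StrongConvexC f m) (h2 : H2 f f' L)
    (h3 : H3 P ℱ ε) (h4 : H4 P f' ε θstar L 2 τ)
    (γ : ℝ) (hγ : γ ∈ Set.Ioo (0 : ℝ) (2 / L))
    (π : Measure (Vec d)) (hπ : IsProbabilityMeasure π) (hπ2 : FiniteSecondMoment π)
    (hπstat : IsStationary P f' ε γ π)
    (φ : Vec d → ℝ) (Lφ : ℝ) (hφ : ∀ x y : Vec d, |φ x - φ y| ≤ Lφ * ‖x - y‖) :
    ∀ θ : Vec d, ∀ k : ℕ, 1 ≤ k →
      |(∫ ϑ, φ ϑ ∂(Riter P f' ε γ k θ)) - ∫ ϑ, φ ϑ ∂π| ≤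
        Lφ * Real.sqrt ((1 - 2 * m * γ * (1 - γ * L / 2)) ^ k) *
          Real.sqrt (∫ ϑ, ‖θ - ϑ‖ ^ 2 ∂π) := by
  intro θ k _
  have hγL : γ * L < 2 := (lt_div_iff₀ hL).mp hγ.2
  have hφ' : LipschitzWith Lφ.toNNReal φ :=
    LipschitzWith.of_dist_le' fun x y => by rw [Real.dist_eq, dist_eq_norm]; exact hφ x y
  refine (abs_integral_Riter_sub_integral_le h1 h2 h3 h4 hL.le hγ.1.le hγL.le hπ2 hπstat hφ'
    θ k).trans ?_
  -- On `ℝ⁰` both sides vanish; otherwise `0 ≤ Lφ` and `m ≤ L`, hence the rate is nonnegative.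
  rcases subsingleton_or_nontrivial (Vec d) with hd | hd
  · have h0 (x y : Vec d) : x - y = 0 := Subsingleton.elim _ _
    simp [h0]
  obtain ⟨x, y, hxy⟩ := exists_pair_ne (Vec d)
  have hLφ : 0 ≤ Lφ := nonneg_of_mul_nonneg_left ((abs_nonneg _).trans (hφ x y))
    (norm_pos_iff.mpr (sub_ne_zero.mpr hxy))
  have hρ := sgd_rate_nonneg (le_of_inner_sub_ge_of_norm_sub_le
    (h1.strongConvexOn.inner_gradient_sub_ge h2.hasGradientAt) h2.norm_sub_le) hγ.1.le hγL.le
  rw [Real.coe_toNNReal _ hLφ, ENNReal.toReal_mul, ENNReal.toReal_pow, ENNReal.toReal_ofReal hρ,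
    toReal_lintegral_enorm_sq (hπ2.memLp_const_sub θ).1,
    Real.sqrt_mul (pow_nonneg hρ k)]
  exact (mul_assoc _ _ _).symm.le

/-- Proposition 2(b): geometric convergence of `R_γ^k φ` to `π_γ(φ)` for
Lipschitz `φ`. -/
theorem kernel_convergence_lipschitz
    {d : ℕ} {Ω : Type*} [MeasurableSpace Ω]
    (P : Measure Ω) [IsProbabilityMeasure P] (ℱ : ℕ → MeasurableSpace Ω)
    (f : Vec d → ℝ) (f' : Vec d → Vec d) (ε : ℕ → Vec d → Ω → Vec d)
    (θstar : Vec d) (m L τ : ℝ) (hm : 0 < m) (hL : 0 < L)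
    (h1 : StrongConvexC f m) (h2 : H2 f f' L) (hmin : IsMinimizer f θstar)
    (h3 : H3 P ℱ ε) (h4 : H4 P f' ε θstar L 2 τ)
    (γ : ℝ) (hγ : γ ∈ Set.Ioo (0 : ℝ) (2 / L))
    (π : Measure (Vec d)) (hπ : IsProbabilityMeasure π) (hπ2 : FiniteSecondMoment π)
    (hπstat : IsStationary P f' ε γ π)
    (φ : Vec d → ℝ) (Lφ : ℝ) (hφ : ∀ x y : Vec d, |φ x - φ y| ≤ Lφ * ‖x - y‖) :
    ∀ θ : Vec d, ∀ k : ℕ, 1 ≤ k →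
      |(∫ ϑ, φ ϑ ∂(Riter P f' ε γ k θ)) - ∫ ϑ, φ ϑ ∂π| ≤
        Lφ * Real.sqrt ((1 - 2 * m * γ * (1 - γ * L / 2)) ^ k) *
          Real.sqrt (∫ ϑ, ‖θ - ϑ‖ ^ 2 ∂π) :=
  kernel_convergence_lipschitz_general P ℱ f f' ε θstar m L τ hL h1 h2 h3 h4 γ hγ π hπ hπ2 hπstat φ
    Lφ hφ

end SGDFormal
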